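/- Let X be a finite-dimensional real vector space, Y ⊂ X a subspace, B the C*-subalgebra of C_b^u(X) generated by C(X̄) and C(overline{X/Y}), and α ∈ 𝕊_X a half-line with α ⊄ Y. Then the character χ_α of C(X̄) (evaluation at the boundary point α) extends to a unique character of B, and this extension is the restriction to B of the morphism τ_α (i.e., it sends u ∈ C(overline{X/Y}) to u(π_Y(α))). -/

import Mathlib

open Filter Topology Set MeasureTheory Bornology BoundedContinuousFunction

noncomputable section

section ConeDefs
variable {X : Type*} [SeminormedAddCommGroup X] [Module ℝ X]

/-- A cone: a set stable under multiplication by positive scalars. -/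
def IsCone (D : Set X) : Prop := ∀ x ∈ D, ∀ r : ℝ, 0 < r → r • x ∈ D

/-- A truncated cone: the intersection of a cone with the complement of a bounded set. -/
def IsTruncCone (C : Set X) : Prop :=
  ∃ D B : Set X, IsCone D ∧ Bornology.IsBounded B ∧ C = D ∩ Bᶜ

/-- The half-line through `a` is eventually in `C`. -/
def EvIn (a : X) (C : Set X) : Prop :=
  ∃ s : ℝ, 0 < s ∧ ∀ r : ℝ, 1 ≤ r → r • (s • a) ∈ C

/-- The filter of truncated-cone neighborhoods of the direction of `a`. -/
def coneFilter (a : X) : Filter X :=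
  Filter.generate {C | IsOpen C ∧ IsTruncCone C ∧ EvIn a C}

/-- The half-line `α` is eventually in `C`. -/
def RayEvIn (α : Module.Ray ℝ X) (C : Set X) : Prop :=
  ∃ (a : X) (ha : a ≠ 0), rayOfNeZero ℝ a ha = α ∧ ∀ r : ℝ, 1 ≤ r → r • a ∈ C

/-- The filter of truncated-cone neighborhoods of the half-line `α`. -/
def rayConeFilter (α : Module.Ray ℝ X) : Filter X :=
  Filter.generate {C | IsOpen C ∧ IsTruncCone C ∧ RayEvIn α C}

end ConeDefs

instance instRayVectorTop {X : Type*} [SeminormedAddCommGroup X] [Module ℝ X] :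
    TopologicalSpace (RayVector ℝ X) :=
  inferInstanceAs (TopologicalSpace {v : X // v ≠ 0})

/-- The sphere at infinity with the quotient topology from `X ∖ {0}`. -/
instance instSphereTop {X : Type*} [SeminormedAddCommGroup X] [Module ℝ X] :
    TopologicalSpace (Module.Ray ℝ X) :=
  inferInstanceAs (TopologicalSpace (Quotient (RayVector.Setoid ℝ X)))

/-- The spherical compactification `X̄ = X ⊔ 𝕊_X`. -/
def SphComp (X : Type*) [SeminormedAddCommGroup X] [Module ℝ X] : Type _ :=
  X ⊕ Module.Ray ℝ X

instance instSphCompTop {X : Type*} [SeminormedAddCommGroup X] [Module ℝ X] :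
    TopologicalSpace (SphComp X) :=
  TopologicalSpace.generateFrom
    ({s | ∃ O : Set X, IsOpen O ∧ s = Sum.inl '' O} ∪
     {s | ∃ C : Set X, IsOpen C ∧ IsTruncCone C ∧
          s = Sum.inl '' C ∪ Sum.inr '' {α : Module.Ray ℝ X | RayEvIn α C}})


section BAlgebras
variable (X : Type*) [NormedAddCommGroup X] [NormedSpace ℝ X]

/-- Generators coming from `C(X̄)`. -/
def SGenSet : Set (X →ᵇ ℂ) :=
  {u | ∃ v : C(SphComp X, ℂ), ∀ x : X, u x = v (Sum.inl x)}

/-- Generators coming from `C(overline{X/Y})`. -/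
def SGenSetQ (Y : Submodule ℝ X) : Set (X →ᵇ ℂ) :=
  {u | ∃ v : C(SphComp (X ⧸ Y), ℂ), ∀ x : X, u x = v (Sum.inl (Submodule.Quotient.mk x))}

/-- The C*-algebra generated by `C(X̄)` and `C(overline{X/Y})` inside `C_b(X)`. -/
def BAlg (Y : Submodule ℝ X) : StarSubalgebra ℂ (X →ᵇ ℂ) :=
  (StarAlgebra.adjoin ℂ (SGenSet X ∪ SGenSetQ X Y)).topologicalClosure

end BAlgebras

section PartA

variable {E : Type*} [SeminormedAddCommGroup E] [Module ℝ E]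

/-- Inclusion of `E` into its spherical compactification. -/
def sInl : E → SphComp E := Sum.inl

/-- Inclusion of the sphere at infinity into the spherical compactification. -/
def sInr : Module.Ray ℝ E → SphComp E := Sum.inr

/-- The subbasis of the topology on `SphComp E`. -/
def sphSubbasis (E : Type*) [SeminormedAddCommGroup E] [Module ℝ E] : Set (Set (SphComp E)) :=
  ({s | ∃ O : Set E, IsOpen O ∧ s = Sum.inl '' O} ∪
   {s | ∃ C : Set E, IsOpen C ∧ IsTruncCone C ∧
        s = Sum.inl '' C ∪ Sum.inr '' {α : Module.Ray ℝ E | RayEvIn α C}})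

lemma sphCompTop_eq (E : Type*) [SeminormedAddCommGroup E] [Module ℝ E] :
    (instSphCompTop : TopologicalSpace (SphComp E)) =
      TopologicalSpace.generateFrom (sphSubbasis E) := rfl

lemma isOpen_of_genOpen {s : Set (SphComp E)}
    (h : TopologicalSpace.GenerateOpen (sphSubbasis E) s) : IsOpen s := h

lemma continuous_sphInl : Continuous (sInl : E → SphComp E) := by
  unfold sInl
  rw [sphCompTop_eq]; refine continuous_generateFrom_iff.2 ?_
  rintro s (⟨O, hO, rfl⟩ | ⟨C, hC, _, rfl⟩)
  · exact (congrArg IsOpen (Set.preimage_image_eq O (Sum.inl_injective (α := E) (β := Module.Ray ℝ E)))).mpr hO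
  · have : (Sum.inl ⁻¹' (Sum.inl '' C ∪ Sum.inr '' {α : Module.Ray ℝ E | RayEvIn α C}) : Set E)
        = C := by
      ext x
      simp [Set.mem_image]
    exact (congrArg IsOpen this).mpr hC

/-- Key lemma: any open set of `SphComp E` containing a point at infinity contains
an open truncated cone around that ray. -/
theorem exists_truncCone_of_mem_open {b : E} (hb : b ≠ 0) {O : Set (SphComp E)} (hO : IsOpen O)
    (hmem : sInr (rayOfNeZero ℝ b hb) ∈ O) :
    ∃ C : Set E, IsOpen C ∧ IsTruncCone C ∧
      (∃ t : ℝ, 0 < t ∧ ∀ r : ℝ, 1 ≤ r → (r * t) • b ∈ C) ∧ ∀ x ∈ C, sInl x ∈ O := by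
  unfold sInr at hmem
  unfold sInl
  rw [sphCompTop_eq] at hO
  induction hO with
  | basic s hs =>
    rcases hs with ⟨O', _, rfl⟩ | ⟨C, hCopen, hCtrunc, rfl⟩
    · exact absurd hmem (by rintro ⟨x, _, hx⟩; cases hx)
    · refine ⟨C, hCopen, hCtrunc, ?_, fun x hx => Or.inl ⟨x, hx, rfl⟩⟩
      rcases hmem with ⟨β, hβ, hβeq⟩ | ⟨β, hβ, hβeq⟩
      · exact absurd hβeq (by simp)
      · have hβα : β = rayOfNeZero ℝ b hb := Sum.inr_injective hβeq
        rw [hβα] at hβ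
        obtain ⟨b₁, hb₁, hray, hb₁C⟩ := hβ
        have hsr : SameRay ℝ b b₁ := ((ray_eq_iff hb hb₁).1 hray.symm)
        obtain ⟨t, ht, htb⟩ := hsr.exists_pos_left hb hb₁
        refine ⟨t, ht, fun r hr => ?_⟩
        have : (r * t) • b = r • b₁ := by rw [← htb, mul_smul]
        rw [this]
        exact hb₁C r hr
  | univ =>
    refine ⟨Set.univ, isOpen_univ, ⟨Set.univ, ∅, fun x _ r _ => trivial,
      Bornology.isBounded_empty, by simp⟩, ⟨1, one_pos, fun r _ => trivial⟩,
      fun x _ => trivial⟩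
  | inter s₁ s₂ _ _ ih₁ ih₂ =>
    obtain ⟨C₁, hC₁o, ⟨D₁, B₁, hD₁, hB₁, hCeq₁⟩, ⟨t₁, ht₁, hC₁⟩, hsub₁⟩ := ih₁ hmem.1
    obtain ⟨C₂, hC₂o, ⟨D₂, B₂, hD₂, hB₂, hCeq₂⟩, ⟨t₂, ht₂, hC₂⟩, hsub₂⟩ := ih₂ hmem.2
    refine ⟨C₁ ∩ C₂, hC₁o.inter hC₂o,
      ⟨D₁ ∩ D₂, B₁ ∪ B₂, fun x hx r hr => ⟨hD₁ x hx.1 r hr, hD₂ x hx.2 r hr⟩, hB₁.union hB₂, ?_⟩,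
      ⟨max t₁ t₂, lt_max_of_lt_left ht₁, fun r hr => ?_⟩,
      fun x hx => ⟨hsub₁ x hx.1, hsub₂ x hx.2⟩⟩
    · rw [hCeq₁, hCeq₂, Set.compl_union]
      ext x; constructor
      · rintro ⟨⟨h1, h2⟩, ⟨h3, h4⟩⟩; exact ⟨⟨h1, h3⟩, h2, h4⟩
      · rintro ⟨⟨h1, h3⟩, h2, h4⟩; exact ⟨⟨h1, h2⟩, h3, h4⟩
    · constructor
      · have : (r * max t₁ t₂) • b = ((r * max t₁ t₂ / t₁) * t₁) • b := by
          rw [div_mul_cancel₀]; exact ht₁.ne'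
        rw [this]
        refine hC₁ _ ?_
        rw [le_div_iff₀ ht₁, one_mul]
        calc t₁ ≤ max t₁ t₂ := le_max_left _ _
          _ = 1 * max t₁ t₂ := (one_mul _).symm
          _ ≤ r * max t₁ t₂ := by
            apply mul_le_mul_of_nonneg_right hr (le_max_of_le_left ht₁.le)
      · have : (r * max t₁ t₂) • b = ((r * max t₁ t₂ / t₂) * t₂) • b := by
          rw [div_mul_cancel₀]; exact ht₂.ne'
        rw [this]
        refine hC₂ _ ?_
        rw [le_div_iff₀ ht₂, one_mul]
        calc t₂ ≤ max t₁ t₂ := le_max_right _ _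
          _ = 1 * max t₁ t₂ := (one_mul _).symm
          _ ≤ r * max t₁ t₂ := by
            apply mul_le_mul_of_nonneg_right hr (le_max_of_le_right ht₂.le)
  | sUnion S hS ih =>
    obtain ⟨s, hsS, hmem'⟩ := hmem
    obtain ⟨C, h1, h2, h3, h4⟩ := ih s hsS hmem'
    exact ⟨C, h1, h2, h3, fun x hx => ⟨s, hsS, h4 x hx⟩⟩

theorem tendsto_inl_smul {b : E} (hb : b ≠ 0) :
    Filter.Tendsto (fun r : ℝ => sInl (r • b)) Filter.atTop
      (𝓝 (sInr (rayOfNeZero ℝ b hb))) := by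
  rw [tendsto_nhds]
  intro O hO hmem
  obtain ⟨C, _, _, ⟨t, ht, hC⟩, hsub⟩ := exists_truncCone_of_mem_open hb hO hmem
  filter_upwards [Filter.eventually_ge_atTop t] with r hr
  have h1 : (1 : ℝ) ≤ r / t := by rw [le_div_iff₀ ht, one_mul]; exact hr
  have : r • b = ((r / t) * t) • b := by rw [div_mul_cancel₀]; exact ht.ne'
  show sInl (r • b) ∈ O
  rw [this]
  exact hsub _ (hC _ h1)

end PartA
section PartB

variable {X : Type*} [NormedAddCommGroup X] [NormedSpace ℝ X]

/-- A fixed ultrafilter extending `atTop` on `ℝ`. -/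
def UF : Ultrafilter ℝ := Ultrafilter.of Filter.atTop

lemma UF_le : (UF : Filter ℝ) ≤ Filter.atTop := Ultrafilter.of_le _

/-- Limit of `u (r • a)` as `r → ∞` along the ultrafilter `UF`. -/
def Phi (a : X) (u : X →ᵇ ℂ) : ℂ := limUnder UF (fun r : ℝ => u (r • a))

lemma tendsto_Phi (a : X) (u : X →ᵇ ℂ) :
    Filter.Tendsto (fun r : ℝ => u (r • a)) UF (𝓝 (Phi a u)) := by
  apply tendsto_nhds_limUnder
  have hb : ∀ r : ℝ, u (r • a) ∈ Metric.closedBall (0 : ℂ) ‖u‖ := fun r => by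
    simpa [Metric.mem_closedBall, dist_zero_right] using u.norm_coe_le_norm (r • a)
  have hle : (UF.map (fun r : ℝ => u (r • a)) : Filter ℂ) ≤ 𝓟 (Metric.closedBall (0 : ℂ) ‖u‖) :=
    Filter.le_principal_iff.2 (Filter.mem_map.2 (Filter.univ_mem' hb))
  obtain ⟨c, _, hc⟩ :=
    (isCompact_closedBall (0 : ℂ) ‖u‖).ultrafilter_le_nhds (UF.map _) hle
  exact ⟨c, hc⟩

lemma Phi_eq (a : X) {u : X →ᵇ ℂ} {c : ℂ}
    (h : Filter.Tendsto (fun r : ℝ => u (r • a)) UF (𝓝 c)) : Phi a u = c :=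
  tendsto_nhds_unique (tendsto_Phi a u) h

lemma Phi_add (a : X) (u v : X →ᵇ ℂ) : Phi a (u + v) = Phi a u + Phi a v :=
  Phi_eq a (by simpa using (tendsto_Phi a u).add (tendsto_Phi a v))

lemma Phi_mul (a : X) (u v : X →ᵇ ℂ) : Phi a (u * v) = Phi a u * Phi a v :=
  Phi_eq a (by simpa using (tendsto_Phi a u).mul (tendsto_Phi a v))

lemma Phi_star (a : X) (u : X →ᵇ ℂ) : Phi a (star u) = star (Phi a u) :=
  Phi_eq a (by simpa using (tendsto_Phi a u).star)

lemma Phi_const (a : X) (c : ℂ) :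
    Phi a (BoundedContinuousFunction.const X c) = c :=
  Phi_eq a (by simpa using (tendsto_const_nhds :
    Filter.Tendsto (fun _ : ℝ => c) UF (𝓝 c)))

lemma Phi_one (a : X) : Phi a (1 : X →ᵇ ℂ) = 1 := Phi_const a 1

lemma Phi_algebraMap (a : X) (c : ℂ) : Phi a (algebraMap ℂ (X →ᵇ ℂ) c) = c := Phi_const a c

variable (Y : Submodule ℝ X)

/-- The candidate character obtained as a limit along the ultrafilter. -/
def chi0 (a : X) : (BAlg X Y) →⋆ₐ[ℂ] ℂ where
  toFun u := Phi a (u : X →ᵇ ℂ)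
  map_one' := by simpa using Phi_one a
  map_mul' u v := by
    show Phi a ((u * v : BAlg X Y) : X →ᵇ ℂ) = Phi a (u : X →ᵇ ℂ) * Phi a (v : X →ᵇ ℂ)
    have : ((u * v : BAlg X Y) : X →ᵇ ℂ) = (u : X →ᵇ ℂ) * (v : X →ᵇ ℂ) := rfl
    rw [this, Phi_mul]
  map_zero' := by
    show Phi a ((0 : BAlg X Y) : X →ᵇ ℂ) = 0
    have : ((0 : BAlg X Y) : X →ᵇ ℂ) = BoundedContinuousFunction.const X 0 := rfl
    rw [this, Phi_const]
  map_add' u v := by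
    show Phi a ((u + v : BAlg X Y) : X →ᵇ ℂ) = Phi a (u : X →ᵇ ℂ) + Phi a (v : X →ᵇ ℂ)
    have : ((u + v : BAlg X Y) : X →ᵇ ℂ) = (u : X →ᵇ ℂ) + (v : X →ᵇ ℂ) := rfl
    rw [this, Phi_add]
  commutes' c := by
    show Phi a ((algebraMap ℂ (BAlg X Y) c : BAlg X Y) : X →ᵇ ℂ) = algebraMap ℂ ℂ c
    have : ((algebraMap ℂ (BAlg X Y) c : BAlg X Y) : X →ᵇ ℂ) = algebraMap ℂ (X →ᵇ ℂ) c := rfl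
    rw [this, Phi_algebraMap]; rfl
  map_star' u := by
    show Phi a ((star u : BAlg X Y) : X →ᵇ ℂ) = star (Phi a (u : X →ᵇ ℂ))
    have : ((star u : BAlg X Y) : X →ᵇ ℂ) = star (u : X →ᵇ ℂ) := rfl
    rw [this, Phi_star]

lemma chi0_prop (a : X) (ha : a ≠ 0) (v : C(SphComp X, ℂ)) (u : BAlg X Y)
    (h : ∀ x : X, (u : X →ᵇ ℂ) x = v (Sum.inl x)) :
    chi0 Y a u = v (Sum.inr (rayOfNeZero ℝ a ha)) := by
  have hfun : (fun r : ℝ => (u : X →ᵇ ℂ) (r • a)) = fun r : ℝ => v (sInl (r • a)) := by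
    funext r; exact h (r • a)
  have htend : Filter.Tendsto (fun r : ℝ => v (sInl (r • a))) Filter.atTop
      (𝓝 (v (sInr (rayOfNeZero ℝ a ha)))) :=
    (v.continuous.tendsto _).comp (tendsto_inl_smul ha)
  have : Filter.Tendsto (fun r : ℝ => (u : X →ᵇ ℂ) (r • a)) UF
      (𝓝 (v (sInr (rayOfNeZero ℝ a ha)))) := by
    rw [hfun]; exact htend.mono_left UF_le
  exact Phi_eq a this

end PartB
section PartD

variable {X : Type*} [NormedAddCommGroup X] [NormedSpace ℝ X] (Y : Submodule ℝ X)

instance : CompleteSpace (BAlg X Y) :=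
  (StarSubalgebra.isClosed_topologicalClosure _).completeSpace_coe

instance : NormOneClass (BAlg X Y) where
  norm_one := by
    have : Nonempty X := ⟨0⟩
    show ‖((1 : BAlg X Y) : X →ᵇ ℂ)‖ = 1
    rw [OneMemClass.coe_one, norm_one]

lemma chi_norm_le (χ : (BAlg X Y) →⋆ₐ[ℂ] ℂ) (y : BAlg X Y) : ‖χ y‖ ≤ ‖y‖ :=
  spectrum.norm_le_norm_of_mem (AlgHom.apply_mem_spectrum (χ : (BAlg X Y) →ₐ[ℂ] ℂ) y)

lemma chi_continuous (χ : (BAlg X Y) →⋆ₐ[ℂ] ℂ) : Continuous χ := by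
  have : LipschitzWith 1 χ := by
    apply LipschitzWith.of_dist_le_mul
    intro y z
    rw [NNReal.coe_one, one_mul, dist_eq_norm, dist_eq_norm, ← map_sub]
    exact chi_norm_le Y χ (y - z)
  exact this.continuous

end PartD
section PartC

variable {X : Type*} [NormedAddCommGroup X] [NormedSpace ℝ X] (Y : Submodule ℝ X)

lemma continuous_mkY : Continuous (fun x : X => (Submodule.Quotient.mk x : X ⧸ Y)) := by
  have : LipschitzWith 1 (fun x : X => (Submodule.Quotient.mk x : X ⧸ Y)) := by
    apply LipschitzWith.of_dist_le_mul
    intro x y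
    rw [NNReal.coe_one, one_mul, dist_eq_norm, dist_eq_norm]
    have : (Submodule.Quotient.mk x : X ⧸ Y) - Submodule.Quotient.mk y
        = (Submodule.Quotient.mk (x - y) : X ⧸ Y) := by
      simp [Submodule.Quotient.mk_sub]
    rw [this]
    exact Submodule.Quotient.norm_mk_le Y (x - y)
  exact this.continuous

set_option maxHeartbeats 2000000 in
/-- The bump-function lemma: a function `u ∈ C(X̄)` with value 1 at the ray of `a`,
bounded by 1, supported where `w ∘ π` is `ε`-close to its value at the ray of `π a`. -/
theorem exists_bump (a : X) (ha : a ≠ 0)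
    (hq : (Submodule.Quotient.mk a : X ⧸ Y) ≠ 0)
    (hn : 0 < ‖(Submodule.Quotient.mk a : X ⧸ Y)‖)
    (w : C(SphComp (X ⧸ Y), ℂ)) {ε : ℝ} (hε : 0 < ε) :
    ∃ (u : X →ᵇ ℂ) (v : C(SphComp X, ℂ)),
      (∀ x : X, u x = v (Sum.inl x)) ∧
      v (Sum.inr (rayOfNeZero ℝ a ha)) = 1 ∧
      ∀ x : X, ‖u x * (w (Sum.inl (Submodule.Quotient.mk x))
        - w (Sum.inr (rayOfNeZero ℝ _ hq)))‖ ≤ ε := by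
  classical
  set π : X → X ⧸ Y := fun x => Submodule.Quotient.mk x with hπ
  set z₀ : X ⧸ Y := π a with hz₀
  set n : ℝ := ‖z₀‖ with hnn
  have hn0 : 0 < n := hn
  have ha0 : (0 : ℝ) < ‖a‖ := norm_pos_iff.2 ha
  set c : ℂ := w (sInr (rayOfNeZero ℝ z₀ hq)) with hc
  -- open neighbourhood of the ray at infinity in the quotient
  have hO : IsOpen (w ⁻¹' Metric.ball c ε) := (Metric.isOpen_ball).preimage w.continuous
  have hOmem : sInr (rayOfNeZero ℝ z₀ hq) ∈ w ⁻¹' Metric.ball c ε := by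
    exact (Metric.mem_ball_self hε : w (sInr (rayOfNeZero ℝ z₀ hq)) ∈ Metric.ball c ε)
  obtain ⟨C, hCopen, ⟨D, B, hD, hB, hCeq⟩, ⟨t, ht, htC⟩, hCO⟩ :=
    exists_truncCone_of_mem_open hq hO hOmem
  -- bound for B
  obtain ⟨MB, hMB⟩ : ∃ r : ℝ, B ⊆ Metric.ball 0 r := (Metric.isBounded_iff_subset_ball 0).1 hB
  -- the radius M
  set M : ℝ := max (n * t) MB + 1 with hM
  have hMnt : n * t ≤ M := by
    have := le_max_left (n * t) MB; linarith
  have hMB' : MB < M := by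
    have := le_max_right (n * t) MB; linarith
  have hM0 : 0 < M := by nlinarith
  -- q₀ ∈ C and its δ-ball
  set q₀ : X ⧸ Y := (M / n) • z₀ with hq₀
  have hq₀C : q₀ ∈ C := by
    have h1 : (1 : ℝ) ≤ M / (n * t) := by
      rw [le_div_iff₀ (by positivity)]; linarith
    have := htC (M / (n * t)) h1
    have heq : (M / (n * t) * t) • z₀ = q₀ := by
      rw [hq₀]; congr 1; field_simp
    rwa [heq] at this
  obtain ⟨δ, hδ0, hδball⟩ := Metric.isOpen_iff.1 hCopen q₀ hq₀C
  -- the distance function and the claim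
  set h : X ⧸ Y → ℝ := fun z => ‖M • z - ‖z‖ • q₀‖ with hh
  have hhom : ∀ (co : ℝ), 0 ≤ co → ∀ z : X ⧸ Y, h (co • z) = co * h z := by
    intro co hco z
    have : M • (co • z) - ‖co • z‖ • q₀ = co • (M • z - ‖z‖ • q₀) := by
      rw [norm_smul, Real.norm_eq_abs, abs_of_nonneg hco, smul_sub]
      rw [smul_comm M co z, mul_smul]
    rw [hh]; simp only []
    rw [this, norm_smul, Real.norm_eq_abs, abs_of_nonneg hco]
  have claim : ∀ z : X ⧸ Y, M ≤ ‖z‖ → h z < δ * ‖z‖ → z ∈ C := by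
    intro z hMz hhz
    have hz0 : (0 : ℝ) < ‖z‖ := lt_of_lt_of_le hM0 hMz
    have hz' : (M / ‖z‖) • z ∈ Metric.ball q₀ δ := by
      rw [Metric.mem_ball, dist_eq_norm]
      have : (M / ‖z‖) • z - q₀ = (‖z‖)⁻¹ • (M • z - ‖z‖ • q₀) := by
        rw [smul_sub, smul_smul, smul_smul, div_eq_mul_inv, mul_comm M (‖z‖)⁻¹]
        rw [inv_mul_cancel₀ hz0.ne', one_smul]
      rw [this, norm_smul, Real.norm_eq_abs, abs_of_nonneg (by positivity)]
      rw [inv_mul_lt_iff₀ hz0, mul_comm]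
      exact hhz
    have hz'C : (M / ‖z‖) • z ∈ C := hδball hz'
    have hz'D : (M / ‖z‖) • z ∈ D := by rw [hCeq] at hz'C; exact hz'C.1
    have hzD : z ∈ D := by
      have := hD _ hz'D (‖z‖ / M) (by positivity)
      have heq : (‖z‖ / M) • (M / ‖z‖) • z = z := by
        rw [smul_smul, div_mul_div_comm, mul_comm]
        rw [div_self (by positivity), one_smul]
      rwa [heq] at this
    have hzB : z ∉ B := by
      intro hzB
      have := hMB hzB
      rw [Metric.mem_ball, dist_zero_right] at this
      linarith
    rw [hCeq]; exact ⟨hzD, hzB⟩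
  -- the cutoff functions
  set g₁ : X ⧸ Y → ℝ := fun z => max 0 (min 1 (δ * ‖z‖ - h z)) with hg₁
  set g₂ : X ⧸ Y → ℝ := fun z => max 0 (min 1 (‖z‖ - M)) with hg₂
  have hg₁01 : ∀ z, 0 ≤ g₁ z ∧ g₁ z ≤ 1 := fun z =>
    ⟨le_max_left _ _, max_le zero_le_one (min_le_left _ _)⟩
  have hg₂01 : ∀ z, 0 ≤ g₂ z ∧ g₂ z ≤ 1 := fun z =>
    ⟨le_max_left _ _, max_le zero_le_one (min_le_left _ _)⟩
  have hg₁pos : ∀ z, 0 < g₁ z → h z < δ * ‖z‖ := by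
    intro z hz
    rw [hg₁] at hz
    rcases lt_max_iff.1 hz with h' | h'
    · exact absurd h' (lt_irrefl 0)
    · rcases lt_min_iff.1 h' with ⟨_, h''⟩; linarith
  have hg₂pos : ∀ z, 0 < g₂ z → M < ‖z‖ := by
    intro z hz
    rw [hg₂] at hz
    rcases lt_max_iff.1 hz with h' | h'
    · exact absurd h' (lt_irrefl 0)
    · rcases lt_min_iff.1 h' with ⟨_, h''⟩; linarith
  have hcont_h : Continuous h := by
    apply Continuous.norm
    fun_prop
  have hcont_g₁ : Continuous g₁ :=
    continuous_const.max ((continuous_const.min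
      ((continuous_const.mul continuous_norm).sub hcont_h)))
  have hcont_g₂ : Continuous g₂ :=
    continuous_const.max ((continuous_const.min (continuous_norm.sub continuous_const)))
  -- the radius S and the bump
  set S : ℝ := ‖a‖ * (M + 1 + δ⁻¹) / n with hS
  have hS0 : 0 < S := by positivity
  set F : X → ℝ := fun y => g₁ (π y) * g₂ (π y) with hF
  have hcont_π : Continuous π := continuous_mkY Y
  have hcont_F : Continuous F := ((hcont_g₁.comp hcont_π).mul (hcont_g₂.comp hcont_π))
  have hF01 : ∀ y, 0 ≤ F y ∧ F y ≤ 1 := by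
    intro y
    constructor
    · exact mul_nonneg (hg₁01 _).1 (hg₂01 _).1
    · exact mul_le_one₀ (hg₁01 _).2 (hg₂01 _).1 (hg₂01 _).2
  -- homogeneity of π
  have hπsmul : ∀ (co : ℝ) (x : X), π (co • x) = co • π x := by
    intro co x; exact Submodule.Quotient.mk_smul Y co x
  -- normalization maps
  set NF : X → X := fun x => (S * ‖x‖⁻¹) • x with hNF
  have hNFsmul : ∀ (co : ℝ), 0 < co → ∀ x : X, x ≠ 0 → NF (co • x) = NF x := by
    intro co hco x hx
    have hx0 : (0 : ℝ) < ‖x‖ := norm_pos_iff.2 hx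
    rw [hNF]; simp only []
    rw [norm_smul, Real.norm_eq_abs, abs_of_nonneg hco.le, smul_smul]
    congr 1
    field_simp
  set κ : X → ℝ := fun x => S / max S ‖x‖ with hκ
  have hκpos : ∀ x, 0 < κ x := fun x => div_pos hS0 (lt_of_lt_of_le hS0 (le_max_left _ _))
  have hκle : ∀ x, κ x ≤ 1 := fun x =>
    div_le_one_of_le₀ (le_max_left _ _) (le_of_lt (lt_of_lt_of_le hS0 (le_max_left _ _)))
  set u : X → ℝ := fun x => F (κ x • x) with hu
  have hcont_u : Continuous u := by
    apply hcont_F.comp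
    apply Continuous.smul _ continuous_id
    apply continuous_const.div (continuous_const.max continuous_norm)
    intro x
    exact ne_of_gt (lt_of_lt_of_le hS0 (le_max_left _ _))
  -- u agrees with F ∘ NF outside the ball of radius S
  have hu_eq : ∀ x : X, S < ‖x‖ → u x = F (NF x) := by
    intro x hx
    rw [hu, hNF]; simp only []
    congr 2
    rw [hκ]; simp only []
    rw [max_eq_right hx.le, div_eq_mul_inv]
  -- support of u
  have hsupp : ∀ x : X, u x ≠ 0 → π x ∈ C := by
    intro x hux
    have hFpos : 0 < g₁ (π (κ x • x)) ∧ 0 < g₂ (π (κ x • x)) := by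
      rw [hu, hF] at hux; simp only [] at hux
      rcases mul_ne_zero_iff.1 hux with ⟨h1, h2⟩
      exact ⟨lt_of_le_of_ne (hg₁01 _).1 (Ne.symm h1), lt_of_le_of_ne (hg₂01 _).1 (Ne.symm h2)⟩
    set zy : X ⧸ Y := π (κ x • x) with hzy
    have hzy' : zy = κ x • π x := hπsmul _ _
    have h1 : h zy < δ * ‖zy‖ := hg₁pos _ hFpos.1
    have h2 : M < ‖zy‖ := hg₂pos _ hFpos.2
    have hκx := hκpos x
    have hπx : π x = (κ x)⁻¹ • zy := by
      rw [hzy', smul_smul, inv_mul_cancel₀ hκx.ne', one_smul]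
    have hκinv : 1 ≤ (κ x)⁻¹ := (one_le_inv₀ hκx).2 (hκle x)
    have hnorm : ‖π x‖ = (κ x)⁻¹ * ‖zy‖ := by
      rw [hπx, norm_smul, Real.norm_eq_abs, abs_of_nonneg (by positivity)]
    have hMle : M ≤ ‖π x‖ := by
      rw [hnorm]
      calc M ≤ ‖zy‖ := h2.le
        _ = 1 * ‖zy‖ := (one_mul _).symm
        _ ≤ (κ x)⁻¹ * ‖zy‖ := by
          apply mul_le_mul_of_nonneg_right hκinv (norm_nonneg _)
    have hhπx : h (π x) < δ * ‖π x‖ := by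
      have e1 : h (π x) = (κ x)⁻¹ * h zy := by
        rw [hπx, hhom _ (by positivity) zy]
      rw [e1, hnorm]
      calc (κ x)⁻¹ * h zy < (κ x)⁻¹ * (δ * ‖zy‖) := by
            apply mul_lt_mul_of_pos_left h1 (by positivity)
        _ = δ * ((κ x)⁻¹ * ‖zy‖) := by ring
    exact claim _ hMle hhπx
  -- the value 1 at the direction of `a`
  have hFNFa : F (NF a) = 1 := by
    have hπNFa : π (NF a) = (S * ‖a‖⁻¹) • z₀ := hπsmul _ _
    have hnormval : ‖(S * ‖a‖⁻¹) • z₀‖ = M + 1 + δ⁻¹ := by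
      rw [norm_smul, Real.norm_eq_abs, abs_of_nonneg (by positivity), ← hnn, hS]
      field_simp
    have hz₀q₀ : ‖z₀‖ • q₀ = M • z₀ := by
      rw [hq₀, ← hnn, smul_smul]
      congr 1
      field_simp
    have hhz₀ : h z₀ = 0 := by
      rw [hh]; simp only []
      rw [hz₀q₀, sub_self, norm_zero]
    have hhval : h ((S * ‖a‖⁻¹) • z₀) = 0 := by
      rw [hhom _ (by positivity) z₀, hhz₀, mul_zero]
    have hg₁val : g₁ ((S * ‖a‖⁻¹) • z₀) = 1 := by
      show max 0 (min 1 (δ * ‖(S * ‖a‖⁻¹) • z₀‖ - h ((S * ‖a‖⁻¹) • z₀))) = 1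
      rw [hnormval, hhval, sub_zero]
      have e1 : min 1 (δ * (M + 1 + δ⁻¹)) = 1 := by
        apply min_eq_left
        have : δ * (M + 1 + δ⁻¹) = δ * (M + 1) + 1 := by
          field_simp
        nlinarith
      rw [e1, max_eq_right zero_le_one]
    have hg₂val : g₂ ((S * ‖a‖⁻¹) • z₀) = 1 := by
      show max 0 (min 1 (‖(S * ‖a‖⁻¹) • z₀‖ - M)) = 1
      rw [hnormval]
      have e2 : min 1 (M + 1 + δ⁻¹ - M) = 1 := by
        apply min_eq_left
        have : (0:ℝ) < δ⁻¹ := by positivity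
        linarith
      rw [e2, max_eq_right zero_le_one]
    have : F (NF a) = g₁ ((S * ‖a‖⁻¹) • z₀) * g₂ ((S * ‖a‖⁻¹) • z₀) := by
      show g₁ (π (NF a)) * g₂ (π (NF a)) = _
      rw [hπNFa]
    rw [this, hg₁val, hg₂val, one_mul]
  have hua : ∀ (b : X) (hb : b ≠ 0), rayOfNeZero ℝ b hb = rayOfNeZero ℝ a ha →
      F (NF b) = 1 := by
    intro b hb hray
    have hsr : SameRay ℝ a b := (ray_eq_iff ha hb).1 (hray.symm ▸ rfl)
    obtain ⟨r, hr, hrb⟩ := hsr.exists_pos_left ha hb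
    have : NF b = NF a := by rw [← hrb]; exact hNFsmul r hr a ha
    rw [this, hFNFa]
  -- the bounded continuous function
  set ubcf : X →ᵇ ℂ := BoundedContinuousFunction.ofNormedAddCommGroup
    (fun x => (u x : ℂ)) (Complex.continuous_ofReal.comp hcont_u) 1 (by
      intro x
      rw [Complex.norm_real, Real.norm_eq_abs, abs_of_nonneg (hF01 _).1]
      exact (hF01 _).2) with hubcf
  -- the continuous extension to the compactification
  set vfun : SphComp X → ℂ := Sum.elim (fun x => (u x : ℂ))
    (fun γ => (F (NF (Module.Ray.someVector γ)) : ℂ)) with hvfun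
  have hvcont : Continuous vfun := by
    rw [continuous_def]
    intro W hW
    -- the three pieces
    set O₁ : Set X := (fun x => (u x : ℂ)) ⁻¹' W ∩ Metric.ball 0 (S + 1) with hO₁
    have hO₁open : IsOpen O₁ :=
      ((hW.preimage (Complex.continuous_ofReal.comp hcont_u)).inter Metric.isOpen_ball)
    set Dst : Set X := {x : X | 0 < ‖x‖ ∧ ((F (NF x) : ℂ)) ∈ W} with hDst
    set Cst : Set X := Dst ∩ (Metric.closedBall 0 S)ᶜ with hCst
    have hCst_open : IsOpen Cst := by
      have heq : Cst = {x : X | S < ‖x‖} ∩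
          (fun x : X => ((F ((S * (max (S / 2) ‖x‖)⁻¹) • x) : ℝ) : ℂ)) ⁻¹' W := by
        ext x
        simp only [hCst, hDst, Set.mem_inter_iff, Set.mem_setOf_eq, Set.mem_compl_iff,
          Metric.mem_closedBall, dist_zero_right, not_le, Set.mem_preimage]
        constructor
        · rintro ⟨⟨hx0, hxW⟩, hxS⟩
          refine ⟨hxS, ?_⟩
          have : max (S / 2) ‖x‖ = ‖x‖ := max_eq_right (by linarith)
          rw [this]
          exact hxW
        · rintro ⟨hxS, hxW⟩
          have : max (S / 2) ‖x‖ = ‖x‖ := max_eq_right (by linarith)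
          rw [this] at hxW
          exact ⟨⟨by linarith, hxW⟩, hxS⟩
      rw [heq]
      apply IsOpen.inter
      · exact isOpen_lt continuous_const continuous_norm
      · apply hW.preimage
        apply Continuous.comp Complex.continuous_ofReal
        apply hcont_F.comp
        apply Continuous.smul _ continuous_id
        apply continuous_const.mul
        apply Continuous.inv₀ (continuous_const.max continuous_norm)
        intro x
        exact ne_of_gt (lt_of_lt_of_le (by positivity) (le_max_left _ _))
    have hCst_cone : IsTruncCone Cst := by
      refine ⟨Dst, Metric.closedBall 0 S, ?_, Metric.isBounded_closedBall, rfl⟩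
      intro x hx r hr
      rcases hx with ⟨hx0, hxW⟩
      constructor
      · rw [norm_smul, Real.norm_eq_abs, abs_of_nonneg hr.le]; positivity
      · have : NF (r • x) = NF x := hNFsmul r hr x (by
          intro h0; rw [h0, norm_zero] at hx0; exact lt_irrefl 0 hx0)
        rw [this]; exact hxW
    -- the inr part
    have hinr_eq : {γ : Module.Ray ℝ X | (F (NF (Module.Ray.someVector γ)) : ℂ) ∈ W}
        = {γ : Module.Ray ℝ X | RayEvIn γ Cst} := by
      ext γ
      simp only [Set.mem_setOf_eq]
      constructor
      · intro hγ
        set b : X := Module.Ray.someVector γ with hb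
        have hb0 : b ≠ 0 := Module.Ray.someVector_ne_zero γ
        have hbn : (0 : ℝ) < ‖b‖ := norm_pos_iff.2 hb0
        refine ⟨(2 * S / ‖b‖) • b, ?_, ?_, ?_⟩
        · intro hzero
          rw [smul_eq_zero] at hzero
          rcases hzero with h' | h'
          · have : (0:ℝ) < 2 * S / ‖b‖ := by positivity
            rw [h'] at this; exact lt_irrefl 0 this
          · exact hb0 h'
        · rw [ray_pos_smul hb0 (by positivity)]
          exact Module.Ray.someVector_ray γ
        · intro r hr
          have hnr : ‖r • (2 * S / ‖b‖) • b‖ = 2 * r * S := by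
            rw [norm_smul, norm_smul, Real.norm_eq_abs, Real.norm_eq_abs,
              abs_of_nonneg (by linarith), abs_of_nonneg (by positivity)]
            field_simp
          constructor
          · constructor
            · rw [hnr]; nlinarith
            · have : NF (r • (2 * S / ‖b‖) • b) = NF b := by
                rw [smul_smul]
                exact hNFsmul _ (by positivity) b hb0
              rw [this]; exact hγ
          · simp only [Set.mem_compl_iff, Metric.mem_closedBall, dist_zero_right, not_le, hnr]
            nlinarith
      · rintro ⟨b₁, hb₁, hrayeq, hmem⟩
        have := hmem 1 le_rfl
        rw [one_smul] at this
        rcases this with ⟨⟨_, hFW⟩, _⟩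
        have hsr : SameRay ℝ b₁ (Module.Ray.someVector γ) := by
          apply (ray_eq_iff hb₁ (Module.Ray.someVector_ne_zero γ)).1
          rw [hrayeq, Module.Ray.someVector_ray]
        obtain ⟨r, hr, hrb⟩ := hsr.exists_pos_left hb₁ (Module.Ray.someVector_ne_zero γ)
        have : NF (Module.Ray.someVector γ) = NF b₁ := by
          rw [← hrb]; exact hNFsmul r hr b₁ hb₁
        rw [this]
        exact hFW
    -- decompose the preimage
    have hpre : vfun ⁻¹' W = Sum.inl '' O₁ ∪
        (Sum.inl '' Cst ∪ Sum.inr '' {γ : Module.Ray ℝ X | RayEvIn γ Cst}) := by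
      ext p
      rcases p with x | γ
      · simp only [Set.mem_preimage, hvfun, Sum.elim_inl, Set.mem_union, Set.mem_image]
        constructor
        · intro hx
          by_cases hxS : ‖x‖ < S + 1
          · exact Or.inl ⟨x, ⟨hx, by simpa [Metric.mem_ball, dist_zero_right] using hxS⟩, rfl⟩
          · push_neg at hxS
            have hxS' : S < ‖x‖ := by linarith
            refine Or.inr (Or.inl ⟨x, ⟨⟨by linarith, ?_⟩, ?_⟩, rfl⟩)
            · rw [← hu_eq x hxS']; exact hx
            · simp only [Set.mem_compl_iff, Metric.mem_closedBall, dist_zero_right, not_le]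
              exact hxS'
        · rintro (⟨y, ⟨hyW, _⟩, hyx⟩ | (⟨y, ⟨⟨hy0, hyW⟩, hyS⟩, hyx⟩ | ⟨γ, _, hcon⟩))
          · cases hyx; exact hyW
          · cases hyx
            simp only [Set.mem_compl_iff, Metric.mem_closedBall, dist_zero_right, not_le] at hyS
            show ((u _ : ℝ) : ℂ) ∈ W
            rw [hu_eq _ hyS]
            exact hyW
          · exact absurd hcon (by simp)
      · simp only [Set.mem_preimage, hvfun, Sum.elim_inr, Set.mem_union, Set.mem_image]
        constructor
        · intro hγ
          refine Or.inr (Or.inr ⟨γ, ?_, rfl⟩)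
          have hmem : γ ∈ {γ : Module.Ray ℝ X | (F (NF (Module.Ray.someVector γ)) : ℂ) ∈ W} := hγ
          rw [hinr_eq] at hmem
          exact hmem
        · rintro (⟨y, _, hcon⟩ | (⟨y, _, hcon⟩ | ⟨γ', hγ', hγeq⟩))
          · exact absurd hcon (by simp)
          · exact absurd hcon (by simp)
          · have : γ' = γ := Sum.inr_injective hγeq
            rw [← this] at *
            have : γ' ∈ {γ : Module.Ray ℝ X | (F (NF (Module.Ray.someVector γ)) : ℂ) ∈ W} := by
              rw [hinr_eq]; exact hγ'
            exact this
      -- end hpre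
    rw [hpre]
    apply IsOpen.union
    · exact isOpen_of_genOpen (TopologicalSpace.GenerateOpen.basic _
        (Or.inl ⟨O₁, hO₁open, rfl⟩))
    · exact isOpen_of_genOpen (TopologicalSpace.GenerateOpen.basic _
        (Or.inr ⟨Cst, hCst_open, hCst_cone, rfl⟩))
  refine ⟨ubcf, ⟨vfun, hvcont⟩, fun x => rfl, ?_, ?_⟩
  · show (F (NF (Module.Ray.someVector (rayOfNeZero ℝ a ha))) : ℂ) = 1
    rw [hua _ (Module.Ray.someVector_ne_zero _) (Module.Ray.someVector_ray _)]
    norm_num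
  · intro x
    by_cases hux : u x = 0
    · show ‖(u x : ℂ) * _‖ ≤ ε
      rw [hux]
      simp [hε.le]
    · have hπxC : π x ∈ C := hsupp x hux
      have hwx : ‖w (Sum.inl (π x)) - c‖ ≤ ε := by
        have := hCO _ hπxC
        simp only [Set.mem_preimage, Metric.mem_ball] at this
        rw [← dist_eq_norm]
        exact le_of_lt (by exact this)
      show ‖(u x : ℂ) * (w (Sum.inl (π x)) - c)‖ ≤ ε
      rw [norm_mul]
      have hub : ‖(u x : ℂ)‖ ≤ 1 := by
        rw [Complex.norm_real, Real.norm_eq_abs, abs_of_nonneg (hF01 _).1]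
        exact (hF01 _).2
      calc ‖(u x : ℂ)‖ * ‖w (Sum.inl (π x)) - c‖ ≤ 1 * ε := by
            apply mul_le_mul hub hwx (norm_nonneg _) zero_le_one
        _ = ε := one_mul ε

end PartC
section PartE

variable {X : Type*} [NormedAddCommGroup X] [NormedSpace ℝ X]

lemma norm_mk_pos (Y : Submodule ℝ X) [FiniteDimensional ℝ X] (a : X) (haY : a ∉ Y) :
    0 < ‖(Submodule.Quotient.mk a : X ⧸ Y)‖ := by
  rcases eq_or_lt_of_le (norm_nonneg (Submodule.Quotient.mk a : X ⧸ Y)) with h0 | h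
  · exfalso
    have hz : ‖QuotientAddGroup.mk' Y.toAddSubgroup a‖ = 0 := h0.symm
    have hcl : a ∈ closure (Y.toAddSubgroup : Set X) :=
      (QuotientAddGroup.norm_mk_eq_zero_iff_mem_closure (S := Y.toAddSubgroup) (m := a)).1 hz
    have hclosed : IsClosed (Y : Set X) := Submodule.closed_of_finiteDimensional Y
    have : a ∈ (Y : Set X) := by
      rwa [show (Y.toAddSubgroup : Set X) = (Y : Set X) from rfl, hclosed.closure_eq] at hcl
    exact haY this
  · exact h

/-- The main computation: any character satisfying the `C(X̄)` condition sends elements of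
`C(overline{X/Y})` to their value at `π(α)`. -/
lemma main_computation (Y : Submodule ℝ X) (a : X) (ha : a ≠ 0)
    (hn : 0 < ‖(Submodule.Quotient.mk a : X ⧸ Y)‖)
    (χ : (BAlg X Y) →⋆ₐ[ℂ] ℂ)
    (hχ : ∀ (v : C(SphComp X, ℂ)) (u : BAlg X Y),
      (∀ x : X, (u : X →ᵇ ℂ) x = v (Sum.inl x)) →
        χ u = v (Sum.inr (rayOfNeZero ℝ a ha)))
    (w : C(SphComp (X ⧸ Y), ℂ)) (u : BAlg X Y)
    (hcoe : ∀ x : X, (u : X →ᵇ ℂ) x = w (Sum.inl (Submodule.Quotient.mk x)))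
    (hq : (Submodule.Quotient.mk a : X ⧸ Y) ≠ 0) :
    χ u = w (Sum.inr (rayOfNeZero ℝ _ hq)) := by
  set c : ℂ := w (Sum.inr (rayOfNeZero ℝ _ hq)) with hcdef
  have key : ∀ ε : ℝ, 0 < ε → ‖χ u - c‖ ≤ ε := by
    intro ε hε
    obtain ⟨ub, v, hubv, hv1, hbound⟩ := exists_bump Y a ha hq hn w hε
    have hub_mem : ub ∈ BAlg X Y :=
      StarSubalgebra.le_topologicalClosure _
        (StarAlgebra.subset_adjoin ℂ _ (Or.inl ⟨v, hubv⟩))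
    set U : BAlg X Y := ⟨ub, hub_mem⟩ with hU
    have hχU : χ U = 1 := by
      rw [hχ v U hubv, hv1]
    set Q : BAlg X Y := U * (u - algebraMap ℂ (BAlg X Y) c) with hQ
    have hval : χ Q = χ u - c := by
      rw [hQ, map_mul, hχU, one_mul, map_sub, AlgHomClass.commutes]
      rfl
    have hQnorm : ‖Q‖ ≤ ε := by
      have hQcoe : ((Q : BAlg X Y) : X →ᵇ ℂ)
          = ub * ((u : X →ᵇ ℂ) - algebraMap ℂ (X →ᵇ ℂ) c) := rfl
      show ‖((Q : BAlg X Y) : X →ᵇ ℂ)‖ ≤ ε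
      rw [hQcoe]
      apply (BoundedContinuousFunction.norm_le hε.le).2
      intro x
      have : (ub * ((u : X →ᵇ ℂ) - algebraMap ℂ (X →ᵇ ℂ) c)) x
          = ub x * ((u : X →ᵇ ℂ) x - c) := rfl
      rw [this, hcoe x]
      exact hbound x
    calc ‖χ u - c‖ = ‖χ Q‖ := by rw [hval]
      _ ≤ ‖Q‖ := chi_norm_le Y χ Q
      _ ≤ ε := hQnorm
  have hzero : ‖χ u - c‖ = 0 := by
    by_contra hne
    have hpos : 0 < ‖χ u - c‖ := lt_of_le_of_ne (norm_nonneg _) (Ne.symm hne)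
    have := key (‖χ u - c‖ / 2) (by linarith)
    linarith
  have := norm_eq_zero.1 hzero
  exact sub_eq_zero.1 this

end PartE
/-- for `α ⊄ Y`, the character `χ_α` of `C(X̄)` extends to a
unique character of the C*-algebra `B` generated by `C(X̄)` and
`C(overline{X/Y})`, and this extension sends `u ∈ C(overline{X/Y})` to
`u (π_Y (α))`. -/
theorem statement15 {X : Type*} [NormedAddCommGroup X] [NormedSpace ℝ X]
    [FiniteDimensional ℝ X] (Y : Submodule ℝ X) (a : X) (ha : a ≠ 0) (haY : a ∉ Y) :
    (∃! χ : (BAlg X Y) →⋆ₐ[ℂ] ℂ,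
      ∀ (v : C(SphComp X, ℂ)) (u : BAlg X Y),
        (∀ x : X, (u : X →ᵇ ℂ) x = v (Sum.inl x)) →
          χ u = v (Sum.inr (rayOfNeZero ℝ a ha))) ∧
    (∀ χ : (BAlg X Y) →⋆ₐ[ℂ] ℂ,
      (∀ (v : C(SphComp X, ℂ)) (u : BAlg X Y),
        (∀ x : X, (u : X →ᵇ ℂ) x = v (Sum.inl x)) →
          χ u = v (Sum.inr (rayOfNeZero ℝ a ha))) →
      ∀ (w : C(SphComp (X ⧸ Y), ℂ)) (u : BAlg X Y),
        (∀ x : X, (u : X →ᵇ ℂ) x = w (Sum.inl (Submodule.Quotient.mk x))) →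
        ∀ hq : (Submodule.Quotient.mk a : X ⧸ Y) ≠ 0,
          χ u = w (Sum.inr (rayOfNeZero ℝ _ hq))) := by
  have hq : (Submodule.Quotient.mk a : X ⧸ Y) ≠ 0 := by
    rw [Ne, Submodule.Quotient.mk_eq_zero]; exact haY
  have hn : 0 < ‖(Submodule.Quotient.mk a : X ⧸ Y)‖ := norm_mk_pos Y a haY
  have hχ₀ : ∀ (v : C(SphComp X, ℂ)) (u : BAlg X Y),
      (∀ x : X, (u : X →ᵇ ℂ) x = v (Sum.inl x)) →
        chi0 Y a u = v (Sum.inr (rayOfNeZero ℝ a ha)) :=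
    fun v u h => chi0_prop Y a ha v u h
  constructor
  · refine ⟨chi0 Y a, hχ₀, ?_⟩
    intro χ hχ
    apply StarAlgHom.ext_topologicalClosure (chi_continuous Y χ) (chi_continuous Y (chi0 Y a))
    apply StarAlgHom.ext_adjoin
    rintro x (hx | hx)
    · obtain ⟨v, hv⟩ := hx
      set U : BAlg X Y :=
        StarSubalgebra.inclusion (StarSubalgebra.le_topologicalClosure _) x with hUdef
      have hUcoe : ∀ y : X, (U : X →ᵇ ℂ) y = v (Sum.inl y) := fun y => hv y
      show χ U = chi0 Y a U
      rw [hχ v U hUcoe, hχ₀ v U hUcoe]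
    · obtain ⟨w, hw⟩ := hx
      set U : BAlg X Y :=
        StarSubalgebra.inclusion (StarSubalgebra.le_topologicalClosure _) x with hUdef
      have hUcoe : ∀ y : X, (U : X →ᵇ ℂ) y = w (Sum.inl (Submodule.Quotient.mk y)) :=
        fun y => hw y
      show χ U = chi0 Y a U
      rw [main_computation Y a ha hn χ hχ w U hUcoe hq,
        main_computation Y a ha hn (chi0 Y a) hχ₀ w U hUcoe hq]
  · intro χ hχ w u hcoe hq'
    exact main_computation Y a ha hn χ hχ w u hcoe hq'
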